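/- Let G be a finite p-group with exactly one conjugacy class of minimal non-abelian subgroups. Then G itself is minimal non-abelian. -/

import Mathlib

open Pointwise

/-- A subgroup is minimal non-abelian if it is non-abelian and all its proper
subgroups are abelian. -/
def IsMinNonab (G : Type*) [Group G] (H : Subgroup G) : Prop :=
  ¬ IsMulCommutative H ∧ ∀ K : Subgroup G, K < H → IsMulCommutative K

/-- `kappa1 G` : the number of conjugacy classes of minimal non-abelian subgroups of `G`. -/
noncomputable def kappa1 (G : Type*) [Group G] : ℕ :=
  Set.ncard {O : Set (Subgroup G) |
    ∃ H : Subgroup G, IsMinNonab G H ∧ O = MulAction.orbit (ConjAct G) H}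

/-!
The minimal non-abelian subgroups of a non-abelian finite `p`-group `G` generate `G`. By induction
on `|G|`, their join `S` contains every proper non-abelian subgroup. If `S ≠ G`, then `S` is the
only non-abelian maximal subgroup, so there are two distinct abelian maximal subgroups `M₁, M₂`,
whose intersection is central, and `G` is generated by two elements: one outside `S` and one it
does not commute with. Maximal subgroups contain all commutators and `p`-th powers, so
`N = M₁ ∩ M₂ ∩ S` has index at most `p²`. Then `N` is a central subgroup of `S` of index at most
`p`, which forces `S` to be abelian.

If all minimal non-abelian subgroups are conjugate and `G` had a proper non-abelian subgroup, the
(normal) maximal subgroup above it would contain one minimal non-abelian subgroup, hence all of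
them, hence `G`.
-/

open Subgroup
open scoped commutatorElement

theorem card_le_orderOf_mul_orderOf_of_closure_pair_eq_top {Q : Type*} [Group Q] [Finite Q]
    {x y : Q} (hxy : Commute x y) (hgen : closure {x, y} = ⊤) :
    Nat.card Q ≤ orderOf x * orderOf y := by
  let f := (zpowers x).subtype.noncommCoprod (zpowers y).subtype <| by
    rintro ⟨_, i, rfl⟩ ⟨_, j, rfl⟩
    exact hxy.zpow_zpow i j
  have hf : Function.Surjective f := by
    rw [← MonoidHom.range_eq_top, eq_top_iff, ← hgen, closure_le, Set.insert_subset_iff,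
      Set.singleton_subset_iff]
    exact ⟨⟨(⟨x, mem_zpowers x⟩, 1), by simp [f]⟩, ⟨(1, ⟨y, mem_zpowers y⟩), by simp [f]⟩⟩
  calc Nat.card Q ≤ Nat.card (zpowers x × zpowers y) := Nat.card_le_card_of_surjective f hf
    _ = orderOf x * orderOf y := by rw [Nat.card_prod, Nat.card_zpowers, Nat.card_zpowers]

namespace Subgroup

variable {G : Type*} [Group G]

theorem isMulCommutative_top_iff : IsMulCommutative (⊤ : Subgroup G) ↔ IsMulCommutative G := by
  simp [isMulCommutative_iff]

theorem isMulCommutative_of_le {H K : Subgroup G} (hHK : H ≤ K) (hK : IsMulCommutative K) :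
    IsMulCommutative H :=
  .of_setLike_mul_comm fun _ ha _ hb => setLike_mul_comm (hHK ha) (hHK hb)

theorem inf_le_center_of_sup_eq_top {H K : Subgroup G} (hH : IsMulCommutative H)
    (hK : IsMulCommutative K) (hHK : H ⊔ K = ⊤) : H ⊓ K ≤ center G := by
  intro z hz
  have hcent : H ⊔ K ≤ centralizer {z} := sup_le
    (fun h hh => mem_centralizer_singleton_iff.mpr (setLike_mul_comm hh hz.1))
    (fun k hk => mem_centralizer_singleton_iff.mpr (setLike_mul_comm hk hz.2))
  rw [hHK] at hcent
  exact mem_center_iff.mpr fun g => mem_centralizer_singleton_iff.mp (hcent (mem_top g))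

theorem le_of_mem_orbit_conjAct {N A B : Subgroup G} [hN : N.Normal]
    (hA : A ∈ MulAction.orbit (ConjAct G) B) (hB : B ≤ N) : A ≤ N := by
  obtain ⟨g, rfl⟩ := hA
  rw [← hN.conjAct g]
  exact pointwise_smul_le_pointwise_smul_iff.mpr hB

theorem exists_notMem_and_notMem {H K : Subgroup G} (hH : H ≠ ⊤) (hK : K ≠ ⊤) :
    ∃ x, x ∉ H ∧ x ∉ K := by
  by_contra! h
  have := SubgroupClass.subset_union.mp fun g (_ : g ∈ (⊤ : Subgroup G)) => by
    by_cases hg : g ∈ H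
    exacts [Or.inl hg, Or.inr (h g hg)]
  exact this.elim (fun h => hH (top_le_iff.mp h)) fun h => hK (top_le_iff.mp h)

theorem exists_notMem_not_commute {K : Subgroup G} (hK : ¬ IsMulCommutative K)
    (hKtop : K ≠ ⊤) : ∃ y ∉ K, ∃ w, ¬ Commute y w := by
  obtain ⟨x, hxK⟩ := SetLike.exists_not_mem_of_ne_top K hKtop rfl
  obtain ⟨v, hv, w, -, hvw⟩ : ∃ v ∈ K, ∃ w ∈ K, v * w ≠ w * v := by
    simpa [isMulCommutative_iff_of_setLike] using hK
  by_cases hxw : Commute x w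
  · exact ⟨v * x, (K.mul_mem_cancel_left hv).not.mpr hxK, w,
      fun h => hvw (by simpa using (h.mul_left hxw.inv_left).eq)⟩
  · exact ⟨x, hxK, w, hxw⟩

theorem index_le_sq_of_closure_pair_eq_top [Finite G] {N : Subgroup G} [N.Normal] {n : ℕ}
    (hn : 0 < n) (hcomm : ∀ a b : G, ⁅a, b⁆ ∈ N) (hpow : ∀ a : G, a ^ n ∈ N) {x y : G}
    (hgen : closure {x, y} = ⊤) : N.index ≤ n ^ 2 := by
  let π := QuotientGroup.mk' N
  have hgen' : closure {π x, π y} = ⊤ := by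
    rw [← Set.image_pair, ← MonoidHom.map_closure, hgen, ← MonoidHom.range_eq_map,
      MonoidHom.range_eq_top.mpr (QuotientGroup.mk'_surjective N)]
  have hord (a : G) : orderOf (π a) ≤ n :=
    orderOf_le_of_pow_eq_one hn <| (QuotientGroup.eq_one_iff _).mpr (hpow a)
  have hxy : Commute (π x) (π y) := by
    rw [← commutatorElement_eq_one_iff_commute, ← map_commutatorElement,
      QuotientGroup.mk'_apply, QuotientGroup.eq_one_iff]
    exact hcomm x y
  calc N.index = Nat.card (G ⧸ N) := index_eq_card N
    _ ≤ orderOf (π x) * orderOf (π y) :=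
      card_le_orderOf_mul_orderOf_of_closure_pair_eq_top hxy hgen'
    _ ≤ n ^ 2 := sq n ▸ Nat.mul_le_mul (hord x) (hord y)

end Subgroup

namespace IsPGroup

variable {G : Type*} [Group G] [Finite G] {p : ℕ} [hp : Fact p.Prime]

theorem normal_of_isCoatom (hG : IsPGroup p G) {M : Subgroup G} (hM : IsCoatom M) : M.Normal :=
  have := hG.isNilpotent
  NormalizerCondition.normal_of_coatom M Group.normalizerCondition_of_isNilpotent hM

theorem index_eq_of_isCoatom (hG : IsPGroup p G) {M : Subgroup G} (hM : IsCoatom M) :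
    M.index = p := by
  obtain ⟨m, hm⟩ := iff_card.mp (hG.to_subgroup M)
  obtain ⟨j, hj⟩ := hG.index M
  have hj0 : j ≠ 0 := by
    rintro rfl
    exact hM.1 (index_eq_one.mp (by rw [hj, pow_zero]))
  have hcard : Nat.card G = p ^ m * p ^ j := by rw [← hm, ← hj, card_mul_index]
  obtain ⟨K, hK, hMK⟩ := Sylow.exists_subgroup_card_pow_succ
    (hcard ▸ pow_succ p m ▸ mul_dvd_mul_left _ (dvd_pow_self p hj0)) hm
  have hKtop : K = ⊤ := (hM.le_iff.mp hMK).resolve_right fun hKM => by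
    rw [hKM, hm] at hK
    exact (Nat.pow_lt_pow_succ hp.out.one_lt).ne hK
  have : p ^ m * M.index = p ^ m * p := by
    rw [← hm, card_mul_index, ← card_top (G := G), ← hKtop, hK, hm, pow_succ]
  exact Nat.eq_of_mul_eq_mul_left (pow_pos hp.out.pos m) this

theorem pow_mem_of_isCoatom (hG : IsPGroup p G) {M : Subgroup G} (hM : IsCoatom M) (g : G) :
    g ^ p ∈ M := by
  have := hG.normal_of_isCoatom hM
  simpa only [hG.index_eq_of_isCoatom hM] using M.pow_index_mem g

theorem commutatorElement_mem_of_isCoatom (hG : IsPGroup p G) {M : Subgroup G} (hM : IsCoatom M)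
    (a b : G) : ⁅a, b⁆ ∈ M := by
  have := hG.normal_of_isCoatom hM
  have : IsCyclic (G ⧸ M) := isCyclic_of_card_dvd_prime (p := p) <| by
    rw [← index_eq_card, hG.index_eq_of_isCoatom hM]
  rw [← QuotientGroup.eq_one_iff, ← QuotientGroup.mk'_apply, map_commutatorElement,
    commutatorElement_eq_one_iff_commute]
  exact mul_comm' _ _

theorem isMulCommutative_of_index_center_le (hG : IsPGroup p G) (h : (center G).index ≤ p) :
    IsMulCommutative G := by
  obtain ⟨j, hj⟩ := hG.index (center G)
  have hj1 : j ≤ 1 := (Nat.pow_le_pow_iff_right hp.out.one_lt).mp (by rw [← hj, pow_one]; exact h)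
  have : IsCyclic (G ⧸ center G) := isCyclic_of_card_dvd_prime (p := p) <| by
    rw [← index_eq_card, hj]
    exact (Nat.pow_dvd_pow p hj1).trans (pow_one p).dvd
  exact isMulCommutative_of_isCyclic_quotient_center_self G

theorem isMulCommutative_of_isCoatom (hG : IsPGroup p G) {x y : G} (hgen : closure {x, y} = ⊤)
    {M₁ M₂ : Subgroup G} (h₁ : IsCoatom M₁) (h₂ : IsCoatom M₂) (hne : M₁ ≠ M₂)
    (hc₁ : IsMulCommutative M₁) (hc₂ : IsMulCommutative M₂)
    {K : Subgroup G} (hK : IsCoatom K) : IsMulCommutative K := by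
  have := hG.normal_of_isCoatom h₁
  have := hG.normal_of_isCoatom h₂
  have := hG.normal_of_isCoatom hK
  set N := M₁ ⊓ M₂ ⊓ K
  have hNZ : N ≤ center G :=
    inf_le_left.trans (inf_le_center_of_sup_eq_top hc₁ hc₂ (h₁.sup_eq_top_of_ne h₂ hne))
  have hN : N.index ≤ p ^ 2 := index_le_sq_of_closure_pair_eq_top hp.out.pos
    (fun a b => ⟨⟨hG.commutatorElement_mem_of_isCoatom h₁ a b,
      hG.commutatorElement_mem_of_isCoatom h₂ a b⟩, hG.commutatorElement_mem_of_isCoatom hK a b⟩)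
    (fun a => ⟨⟨hG.pow_mem_of_isCoatom h₁ a, hG.pow_mem_of_isCoatom h₂ a⟩,
      hG.pow_mem_of_isCoatom hK a⟩) hgen
  have hNK : N.relIndex K ≤ p := by
    have hmul := relIndex_mul_index (inf_le_right : N ≤ K)
    rw [hG.index_eq_of_isCoatom hK] at hmul
    nlinarith [hp.out.pos]
  have hNZK : N.subgroupOf K ≤ center K := fun k hk =>
    mem_center_iff.mpr fun g => Subtype.ext (mem_center_iff.mp (hNZ hk) g)
  exact (hG.to_subgroup K).isMulCommutative_of_index_center_le
    ((index_antitone hNZK).trans hNK)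

theorem isMulCommutative_of_forall_le (hG : IsPGroup p G) {K : Subgroup G} (hKtop : K ≠ ⊤)
    (hK : ∀ H : Subgroup G, H ≠ ⊤ → ¬ IsMulCommutative H → H ≤ K) : IsMulCommutative K := by
  by_contra hKc
  have hcoatom (M : Subgroup G) (hM : IsCoatom M) (hMK : M ≠ K) : IsMulCommutative M := by
    by_contra hMc
    exact hMK ((hM.le_iff.mp (hK M hM.1 hMc)).resolve_left hKtop).symm
  have hKco : IsCoatom K := by
    obtain ⟨M, hM, hKM⟩ := (eq_top_or_exists_le_coatom K).resolve_left hKtop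
    obtain rfl : M = K :=
      by_contra fun hMK => hKc (isMulCommutative_of_le hKM (hcoatom M hM hMK))
    exact hM
  have hcoatom_mem (x : G) : ∃ M : Subgroup G, IsCoatom M ∧ x ∈ M := by
    obtain ⟨M, hM, hxM⟩ := (eq_top_or_exists_le_coatom (zpowers x)).resolve_left fun h =>
      hKc (isMulCommutative_of_le (h ▸ le_top) inferInstance)
    exact ⟨M, hM, hxM (mem_zpowers x)⟩
  obtain ⟨x₁, hx₁K⟩ := SetLike.exists_not_mem_of_ne_top K hKtop rfl
  obtain ⟨M₁, hM₁, hx₁M₁⟩ := hcoatom_mem x₁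
  obtain ⟨x₂, hx₂K, hx₂M₁⟩ := exists_notMem_and_notMem hKtop hM₁.1
  obtain ⟨M₂, hM₂, hx₂M₂⟩ := hcoatom_mem x₂
  obtain ⟨y, hyK, w, hw⟩ := exists_notMem_not_commute hKc hKtop
  have hgen : closure {y, w} = ⊤ := by
    by_contra hne
    refine hyK (hK _ hne ?_ (subset_closure (by simp)))
    exact fun hc => hw (isMulCommutative_iff_of_setLike.mp hc y (subset_closure (by simp)) w
      (subset_closure (by simp)))
  exact hKc (hG.isMulCommutative_of_isCoatom hgen hM₁ hM₂
    (fun h => hx₂M₁ (h ▸ hx₂M₂)) (hcoatom M₁ hM₁ fun h => hx₁K (h ▸ hx₁M₁))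
    (hcoatom M₂ hM₂ fun h => hx₂K (h ▸ hx₂M₂)) hKco)

end IsPGroup

section IsMinNonab

variable {G : Type*} [Group G]

theorem exists_isMinNonab_le [Finite G] {H : Subgroup G} (hH : ¬ IsMulCommutative H) :
    ∃ B ≤ H, IsMinNonab G B := by
  obtain ⟨B, hBH, hB⟩ :=
    exists_minimal_le_of_wellFoundedLT (fun K : Subgroup G => ¬ IsMulCommutative K) H hH
  exact ⟨B, hBH, hB.1, fun K hKB => by_contra fun hK => (hKB.trans_le (hB.2 hK hKB.le)).false⟩

theorem IsMinNonab.map_subtype {M : Subgroup G} {K : Subgroup M} (hK : IsMinNonab M K) :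
    IsMinNonab G (K.map M.subtype) := by
  refine ⟨fun h => hK.1 ?_, fun L hL => ?_⟩
  · rw [← comap_map_eq_self_of_injective M.subtype_injective K]
    exact comap_injective_isMulCommutative (H := K.map M.subtype) M.subtype_injective
  · have hL' : (L.subgroupOf M).map M.subtype = L := by
      rw [subgroupOf_map_subtype, inf_eq_left]
      exact hL.le.trans (map_subtype_le K)
    rw [← hL'] at hL ⊢
    have := hK.2 _ ((map_lt_map_iff_of_injective M.subtype_injective).mp hL)
    infer_instance

theorem map_sSup_isMinNonab_le (M : Subgroup G) :
    (sSup {K : Subgroup M | IsMinNonab M K}).map M.subtype ≤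
      sSup {H : Subgroup G | IsMinNonab G H} :=
  map_le_iff_le_comap.mpr <| sSup_le fun _ hK => map_le_iff_le_comap.mp (le_sSup hK.map_subtype)

theorem exists_isMinNonab_forall_mem_orbit_of_kappa1_eq_one (h : kappa1 G = 1) :
    ∃ B, IsMinNonab G B ∧ ∀ A, IsMinNonab G A → A ∈ MulAction.orbit (ConjAct G) B := by
  obtain ⟨O, hO⟩ := Set.ncard_eq_one.mp h
  obtain ⟨B, hB, rfl⟩ : O ∈ _ := hO ▸ Set.mem_singleton O
  refine ⟨B, hB, fun A hA => ?_⟩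
  have hA' : MulAction.orbit (ConjAct G) A ∈ {O : Set (Subgroup G) |
      ∃ H : Subgroup G, IsMinNonab G H ∧ O = MulAction.orbit (ConjAct G) H} := ⟨A, hA, rfl⟩
  rwa [hO, Set.mem_singleton_iff, MulAction.orbit_eq_iff] at hA'

end IsMinNonab

theorem IsPGroup.sSup_isMinNonab_eq_top {G : Type*} [Group G] [Finite G] {p : ℕ} [Fact p.Prime]
    (hG : IsPGroup p G) (hG' : ¬ IsMulCommutative G) :
    sSup {H : Subgroup G | IsMinNonab G H} = ⊤ := by
  induction hn : Nat.card G using Nat.strong_induction_on generalizing G with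
  | _ n ih =>
  by_contra hS
  have hle (H : Subgroup G) (hH : H ≠ ⊤) (hHc : ¬ IsMulCommutative H) :
      H ≤ sSup {H : Subgroup G | IsMinNonab G H} := by
    obtain ⟨M, hM, hHM⟩ := (eq_top_or_exists_le_coatom H).resolve_left hH
    have hMc : ¬ IsMulCommutative M := fun h => hHc (isMulCommutative_of_le hHM h)
    have hcard : Nat.card M < n := hn ▸ M.card_mul_index ▸
      lt_mul_of_one_lt_right Nat.card_pos (one_lt_index_of_ne_top hM.1)
    calc H ≤ (⊤ : Subgroup M).map M.subtype := by rwa [← MonoidHom.range_eq_map, range_subtype]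
      _ = (sSup {K : Subgroup M | IsMinNonab M K}).map M.subtype := by
        rw [ih _ hcard (hG.to_subgroup M) hMc rfl]
      _ ≤ _ := map_sSup_isMinNonab_le M
  obtain ⟨B, -, hB⟩ := exists_isMinNonab_le (H := ⊤) (isMulCommutative_top_iff.not.mpr hG')
  exact hB.1 (isMulCommutative_of_le (le_sSup hB) (hG.isMulCommutative_of_forall_le hS hle))

/-- A finite `p`-group with exactly one conjugacy class of minimal non-abelian subgroups
is itself minimal non-abelian. -/
theorem stmt6 {G : Type*} [Group G] [Finite G] (p : ℕ) (hp : p.Prime)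
    (hG : IsPGroup p G) (h : kappa1 G = 1) :
    IsMinNonab G ⊤ := by
  have : Fact p.Prime := ⟨hp⟩
  obtain ⟨B, hB, hconj⟩ := exists_isMinNonab_forall_mem_orbit_of_kappa1_eq_one h
  have hG' : ¬ IsMulCommutative G := fun _ => hB.1 inferInstance
  refine ⟨isMulCommutative_top_iff.not.mpr hG', fun L hL => by_contra fun hLc => ?_⟩
  obtain ⟨M, hM, hLM⟩ := (eq_top_or_exists_le_coatom L).resolve_left hL.ne
  have := hG.normal_of_isCoatom hM
  obtain ⟨B', hB'L, hB'⟩ := exists_isMinNonab_le hLc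
  have hSM : sSup {H : Subgroup G | IsMinNonab G H} ≤ M := sSup_le fun A hA =>
    le_of_mem_orbit_conjAct (MulAction.orbit_eq_iff.mpr (hconj B' hB') ▸ hconj A hA)
      (hB'L.trans hLM)
  exact hM.1 (top_unique (hG.sSup_isMinNonab_eq_top hG' ▸ hSM))
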